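/- arXiv:2003.13607 — 2 statements merged into one kernel-verified Lean document; each statement's English description precedes it below -/
import Mathlib

section
/- For any symmetric matrix A ∈ ℝ^{d×d} and any vector u ∈ ℝ^d with ‖u‖ = 1, one has ‖A‖_F² − ‖(I − uuᵀ)A(I − uuᵀ)‖_F² ≥ ‖Au‖². -/
noncomputable section

open Matrix Finset

abbrev E (d : ℕ) := EuclideanSpace ℝ (Fin d)
abbrev Mat (d : ℕ) := Matrix (Fin d) (Fin d) ℝ

/-- Spectral (operator 2-) norm of a real matrix. -/
def spec {d : ℕ} (A : Mat d) : ℝ := ‖Matrix.toEuclideanCLM (𝕜 := ℝ) A‖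

/-- Frobenius norm of a real matrix. -/
def frob {d : ℕ} (A : Mat d) : ℝ := Real.sqrt (∑ i, ∑ j, (A i j) ^ 2)

/-- A matrix acting on a Euclidean vector. -/
def mApp {d : ℕ} (A : Mat d) (v : E d) : E d := Matrix.toEuclideanCLM (𝕜 := ℝ) A v

/-- Outer product `u vᵀ`. -/
def outer {d : ℕ} (u v : E d) : Mat d := Matrix.of fun i j => u i * v j

/-- Euclidean dot product. -/
def dot {d : ℕ} (u v : E d) : ℝ := ∑ i, u i * v i

lemma frob_sq {d : ℕ} (A : Mat d) : frob A ^ 2 = ∑ i, ∑ j, (A i j) ^ 2 := by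
  rw [frob, Real.sq_sqrt]
  positivity

theorem frobenius_projection_inequality {d : ℕ} (A : Mat d) (hA : A.IsSymm)
    (u : E d) (hu : ‖u‖ = 1) :
    ‖mApp A u‖ ^ 2 ≤ frob A ^ 2 - frob ((1 - outer u u) * A * (1 - outer u u)) ^ 2 := by
  have hAs : ∀ i j, A j i = A i j := fun i j => by
    conv_lhs => rw [← hA]
    rfl
  set v : Fin d → ℝ := fun i => ∑ j, A i j * u j with hv
  set c : ℝ := ∑ i, v i * u i with hc
  have hu2 : ∑ i, (u i) ^ 2 = 1 := by
    have := EuclideanSpace.norm_eq u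
    rw [hu] at this
    have h2 : Real.sqrt (∑ i, ‖u i‖ ^ 2) = 1 := this.symm
    have := congrArg (· ^ 2) h2
    simp only [Real.sq_sqrt (by positivity : (0:ℝ) ≤ ∑ i, ‖u i‖ ^ 2)] at this
    simpa [Real.norm_eq_abs, sq_abs] using this
  have hnorm : ‖mApp A u‖ ^ 2 = ∑ i, (v i) ^ 2 := by
    rw [mApp, EuclideanSpace.norm_eq, Real.sq_sqrt (by positivity)]
    congr 1
    ext i
    rw [Real.norm_eq_abs, sq_abs]
    congr 1
  have hPA : ∀ i j, (outer u u * A) i j = u i * v j := by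
    intro i j
    rw [Matrix.mul_apply, Finset.sum_congr rfl (fun k _ => show (outer u u) i k * A k j = u i * (A j k * u k) by
      simp [outer, hAs]; ring), ← Finset.mul_sum]
  have hAP : ∀ i j, (A * outer u u) i j = v i * u j := by
    intro i j
    rw [Matrix.mul_apply, Finset.sum_congr rfl (fun k _ => show A i k * (outer u u) k j = (A i k * u k) * u j by
      simp [outer]; ring), ← Finset.sum_mul]
  have hPAP : ∀ i j, (outer u u * A * outer u u) i j = c * (u i * u j) := by
    intro i j
    rw [Matrix.mul_apply, Finset.sum_congr rfl (fun k _ => show (outer u u * A) i k * (outer u u) k j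
      = (v k * u k) * (u i * u j) by rw [hPA]; simp [outer]; ring), ← Finset.sum_mul, hc]
  have hexp : (1 - outer u u) * A * (1 - outer u u)
      = A - outer u u * A - A * outer u u + outer u u * A * outer u u := by
    noncomm_ring
  have hB : ∀ i j, ((1 - outer u u) * A * (1 - outer u u)) i j
      = A i j - u i * v j - v i * u j + c * (u i * u j) := by
    intro i j
    rw [hexp]
    simp [Matrix.sub_apply, Matrix.add_apply, hPA, hAP, hPAP]
  set V : ℝ := ∑ i, (v i) ^ 2 with hV
  set w : Fin d → ℝ := fun i => ∑ j, A i j * v j with hw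
  have huw : ∑ i, u i * w i = V := by
    calc ∑ i, u i * w i = ∑ i, ∑ j, u i * (A i j * v j) := by
          refine Finset.sum_congr rfl fun i _ => ?_
          rw [show w i = ∑ j, A i j * v j from rfl, Finset.mul_sum]
      _ = ∑ j, ∑ i, u i * (A i j * v j) := Finset.sum_comm
      _ = ∑ j, (∑ i, A j i * u i) * v j := by
          refine Finset.sum_congr rfl fun j _ => ?_
          rw [Finset.sum_mul]
          refine Finset.sum_congr rfl fun i _ => ?_
          rw [hAs]; ring
      _ = V := by
          rw [hV]
          refine Finset.sum_congr rfl fun j _ => ?_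
          rw [show (∑ i, A j i * u i) = v j from rfl]; ring
  have inner : ∀ i, ∑ j, (((1 - outer u u) * A * (1 - outer u u)) i j) ^ 2
      = (∑ j, (A i j) ^ 2) + (-2 * u i) * w i + (-2 * v i + 2 * c * u i) * v i
        + (u i) ^ 2 * V + ((v i) ^ 2 - 2 * c * v i * u i + c ^ 2 * (u i) ^ 2) * 1
        + (2 * u i * v i - 2 * c * (u i) ^ 2) * c := by
    intro i
    have hterm : ∀ j, (((1 - outer u u) * A * (1 - outer u u)) i j) ^ 2
        = (A i j) ^ 2 + (-2 * u i) * (A i j * v j) + (-2 * v i + 2 * c * u i) * (A i j * u j)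
          + (u i) ^ 2 * (v j) ^ 2 + ((v i) ^ 2 - 2 * c * v i * u i + c ^ 2 * (u i) ^ 2) * (u j) ^ 2
          + (2 * u i * v i - 2 * c * (u i) ^ 2) * (v j * u j) := fun j => by rw [hB]; ring
    rw [Finset.sum_congr rfl fun j _ => hterm j]
    simp only [Finset.sum_add_distrib, ← Finset.mul_sum]
    rw [hu2, show (∑ j, A i j * v j) = w i from rfl,
      show (∑ j, A i j * u j) = v i from rfl, ← hV, ← hc]
  have key : ∑ i, ∑ j, (((1 - outer u u) * A * (1 - outer u u)) i j) ^ 2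
      = (∑ i, ∑ j, (A i j) ^ 2) - 2 * V + c ^ 2 := by
    rw [Finset.sum_congr rfl fun i _ => inner i]
    simp only [Finset.sum_add_distrib]
    have h1 : ∑ i, (-2 * u i) * w i = -2 * V := by
      rw [Finset.sum_congr rfl fun i _ => show (-2 * u i) * w i = (-2) * (u i * w i) from by ring,
        ← Finset.mul_sum, huw]
    have h2 : ∑ i, (-2 * v i + 2 * c * u i) * v i = -2 * V + 2 * c ^ 2 := by
      rw [Finset.sum_congr rfl fun i _ => show (-2 * v i + 2 * c * u i) * v i
        = -2 * (v i) ^ 2 + 2 * c * (v i * u i) from by ring,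
        Finset.sum_add_distrib, ← Finset.mul_sum, ← Finset.mul_sum, ← hV, ← hc]
      ring
    have h3 : ∑ i, (u i) ^ 2 * V = V := by rw [← Finset.sum_mul, hu2]; ring
    have h4 : ∑ i, ((v i) ^ 2 - 2 * c * v i * u i + c ^ 2 * (u i) ^ 2) * 1 = V - 2 * c ^ 2 + c ^ 2 := by
      rw [Finset.sum_congr rfl fun i _ => show ((v i) ^ 2 - 2 * c * v i * u i + c ^ 2 * (u i) ^ 2) * 1
        = (v i) ^ 2 + (-2 * c) * (v i * u i) + c ^ 2 * (u i) ^ 2 from by ring,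
        Finset.sum_add_distrib, Finset.sum_add_distrib, ← Finset.mul_sum, ← Finset.mul_sum,
        ← hV, ← hc, hu2]
      ring
    have h5 : ∑ i, (2 * u i * v i - 2 * c * (u i) ^ 2) * c = 2 * c ^ 2 - 2 * c ^ 2 := by
      rw [Finset.sum_congr rfl fun i _ => show (2 * u i * v i - 2 * c * (u i) ^ 2) * c
        = (2 * c) * (v i * u i) + (-2 * c ^ 2) * (u i) ^ 2 from by ring,
        Finset.sum_add_distrib, ← Finset.mul_sum, ← Finset.mul_sum, ← hc, hu2]
      ring
    rw [h1, h2, h3, h4, h5]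
    ring
  have hCS : c ^ 2 ≤ V := by
    have := Finset.sum_mul_sq_le_sq_mul_sq Finset.univ v (fun i => u i)
    rw [hu2] at this
    calc c ^ 2 ≤ V * 1 := by rw [hc, hV]; simpa using this
      _ = V := by ring
  rw [hnorm, frob_sq, frob_sq, key]
  linarith
end
end

section
/- For any two points x, x' ∈ ℝ^d, setting s = x' − x, y = ∇f(x') − ∇f(x), ŝ = H_*^{1/2}s, ŷ = H_*^{-1/2}y, σ = (M/μ^{3/2})‖H_*^{1/2}(x − x_*)‖, σ' = (M/μ^{3/2})‖H_*^{1/2}(x' − x_*)‖ and τ = max{σ, σ'}, one has ‖ŷ − ŝ‖ ≤ τ‖ŝ‖. -/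
/-!
Because `H_* = (H_*^{1/2})²`, the difference `ŷ − ŝ` equals `H_*^{-1/2}(y − H_* s)`. The segment
`[x, x']` lies in the ball around `x_*` of radius `max(‖x − x_*‖, ‖x' − x_*‖)`, so the mean value
inequality together with Assumption 2 gives `‖y − H_* s‖ ≤ M · max(‖x − x_*‖, ‖x' − x_*‖) · ‖s‖`.
Strong convexity at `x_*` gives `‖H_*^{1/2} v‖ ≥ √μ ‖v‖`; this converts `‖H_*^{-1/2}·‖`, the
distances to `x_*` and `‖s‖` into weighted norms at a cost of `1/√μ` each, whence `M / μ^{3/2}`.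
-/

noncomputable section

open Matrix Finset

/-- `σ(x) = (M/μ^{3/2})·‖H_*^{1/2}(x − x_*)‖`. -/
def sig {d : ℕ} (M μ : ℝ) (sqH : Mat d) (xs x : E d) : ℝ :=
  M / μ ^ ((3:ℝ)/2) * ‖mApp sqH (x - xs)‖

/-- `τ = max{σ(x), σ(x')}`. -/
def tauP {d : ℕ} (M μ : ℝ) (sqH : Mat d) (xs x x' : E d) : ℝ :=
  max (sig M μ sqH xs x) (sig M μ sqH xs x')

section MeanValue

variable {F G : Type*} [NormedAddCommGroup F] [NormedSpace ℝ F]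
  [NormedAddCommGroup G] [NormedSpace ℝ G]

theorem norm_sub_sub_fderiv_le_of_lipschitz_toward {g : F → G} {g' : F → F →L[ℝ] G}
    {xs : F} {M : ℝ} (hM : 0 ≤ M) (hg : ∀ x, HasFDerivAt g (g' x) x)
    (hLip : ∀ x, ‖g' x - g' xs‖ ≤ M * ‖x - xs‖) (x x' : F) :
    ‖g x' - g x - g' xs (x' - x)‖ ≤ M * max ‖x - xs‖ ‖x' - xs‖ * ‖x' - x‖ := by
  set r := max ‖x - xs‖ ‖x' - xs‖
  have hball : segment ℝ x x' ⊆ Metric.closedBall xs r :=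
    (convex_closedBall xs r).segment_subset
      (mem_closedBall_iff_norm.2 (le_max_left _ _)) (mem_closedBall_iff_norm.2 (le_max_right _ _))
  refine (convex_segment x x').norm_image_sub_le_of_norm_hasFDerivWithin_le'
    (fun z _ => (hg z).hasFDerivWithinAt) (fun z hz => ?_)
    (left_mem_segment ℝ x x') (right_mem_segment ℝ x x')
  exact (hLip z).trans (by gcongr; exact mem_closedBall_iff_norm.1 (hball hz))

end MeanValue

open scoped InnerProductSpace

section Weighted

variable {d : ℕ}

theorem mApp_mul (A B : Mat d) (v : E d) : mApp (A * B) v = mApp A (mApp B v) := by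
  simp [mApp, _root_.map_mul]

theorem mApp_sub (A : Mat d) (v w : E d) : mApp A (v - w) = mApp A v - mApp A w :=
  map_sub _ v w

theorem dot_eq_inner (u v : E d) : dot u v = ⟪u, v⟫_ℝ := by
  simp [dot, PiLp.inner_apply, mul_comm]

theorem Matrix.IsHermitian.inner_mApp_left {S : Mat d} (hS : S.IsHermitian) (v w : E d) :
    ⟪mApp S v, w⟫_ℝ = ⟪v, mApp S w⟫_ℝ :=
  (Matrix.isSymmetric_toEuclideanLin_iff.2 hS) v w

theorem Matrix.IsHermitian.dot_mApp_mul_self {S : Mat d} (hS : S.IsHermitian) (v : E d) :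
    dot v (mApp (S * S) v) = ‖mApp S v‖ ^ 2 := by
  rw [dot_eq_inner, mApp_mul, ← hS.inner_mApp_left, real_inner_self_eq_norm_sq]

theorem Matrix.IsHermitian.sqrt_mul_norm_le_norm_mApp {S : Mat d} (hS : S.IsHermitian) {μ : ℝ}
    {v : E d} (hv : μ * ‖v‖ ^ 2 ≤ dot v (mApp (S * S) v)) :
    √μ * ‖v‖ ≤ ‖mApp S v‖ := by
  rw [hS.dot_mApp_mul_self] at hv
  calc √μ * ‖v‖ = √(μ * ‖v‖ ^ 2) := by
        rw [Real.sqrt_mul' _ (sq_nonneg _), Real.sqrt_sq (norm_nonneg _)]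
    _ ≤ √(‖mApp S v‖ ^ 2) := Real.sqrt_le_sqrt hv
    _ = ‖mApp S v‖ := Real.sqrt_sq (norm_nonneg _)

theorem norm_mApp_inv_le {S : Mat d} (hS : IsUnit S.det) {c : ℝ} (hc : 0 < c)
    (hlow : ∀ v, c * ‖v‖ ≤ ‖mApp S v‖) (w : E d) :
    ‖mApp S⁻¹ w‖ ≤ c⁻¹ * ‖w‖ := by
  have h := hlow (mApp S⁻¹ w)
  rw [← mApp_mul, Matrix.mul_nonsing_inv _ hS] at h
  rw [inv_mul_eq_div, le_div_iff₀ hc, mul_comm]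
  simpa [mApp] using h

theorem mApp_inv_sub_mApp {S : Mat d} (hS : IsUnit S.det) (y s : E d) :
    mApp S⁻¹ y - mApp S s = mApp S⁻¹ (y - mApp (S * S) s) := by
  rw [mApp_sub, ← mApp_mul, ← Matrix.mul_assoc, Matrix.nonsing_inv_mul _ hS, Matrix.one_mul]

theorem tauP_eq {M μ : ℝ} (hM : 0 ≤ M) (hμ : 0 ≤ μ) (S : Mat d) (xs x x' : E d) :
    tauP M μ S xs x x' = M / √μ ^ 3 * max ‖mApp S (x - xs)‖ ‖mApp S (x' - xs)‖ := by
  have hpow : μ ^ ((3:ℝ)/2) = √μ ^ 3 := by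
    rw [Real.sqrt_eq_rpow, ← Real.rpow_natCast, ← Real.rpow_mul hμ]
    norm_num
  rw [tauP, sig, sig, hpow, mul_max_of_nonneg _ _ (by positivity)]

end Weighted

theorem weighted_secant_difference_bound_general
    {d : ℕ}
    (g : E d → E d) (Hess : E d → Mat d) (xs : E d)
    (μ M : ℝ) (hμ : 0 < μ) (hM : 0 < M)
    -- `g` is the gradient of `f`, and `Hess` its Hessian (so `f` is twice differentiable)
    (hHd : ∀ x, HasFDerivAt g (Matrix.toEuclideanCLM (𝕜 := ℝ) (Hess x)) x)
    -- Assumption 1: strong convexity and gradient Lipschitz continuity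
    (hHl : ∀ x v, μ * ‖v‖ ^ 2 ≤ dot v (mApp (Hess x) v))
    -- Assumption 2: Hessian Lipschitz continuity toward the optimum
    (hLip : ∀ x, spec (Hess x - Hess xs) ≤ M * ‖x - xs‖)
    -- `sqH` is the positive definite square root `H_*^{1/2}` of `H_* = ∇²f(x_*)`
    (sqH : Mat d) (hsqH : sqH.PosDef) (hsqH2 : sqH * sqH = Hess xs)
    (x x' : E d) :
    ‖mApp sqH⁻¹ (g x' - g x) - mApp sqH (x' - x)‖ ≤
      tauP M μ sqH xs x x' * ‖mApp sqH (x' - x)‖ := by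
  have hdet : IsUnit sqH.det := isUnit_iff_ne_zero.2 hsqH.det_pos.ne'
  have hsqμ : 0 < √μ := Real.sqrt_pos.2 hμ
  have hlow : ∀ v, √μ * ‖v‖ ≤ ‖mApp sqH v‖ := fun v =>
    hsqH.isHermitian.sqrt_mul_norm_le_norm_mApp (hsqH2 ▸ hHl xs v)
  have hlow' : ∀ v, ‖v‖ ≤ (√μ)⁻¹ * ‖mApp sqH v‖ := fun v => by
    rw [inv_mul_eq_div, le_div_iff₀ hsqμ, mul_comm]; exact hlow v
  have hsecant : ‖g x' - g x - mApp (Hess xs) (x' - x)‖ ≤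
      M * max ‖x - xs‖ ‖x' - xs‖ * ‖x' - x‖ :=
    norm_sub_sub_fderiv_le_of_lipschitz_toward hM.le hHd
      (fun z => by simpa only [spec, map_sub] using hLip z) x x'
  have hmax : max ‖x - xs‖ ‖x' - xs‖ ≤
      (√μ)⁻¹ * max ‖mApp sqH (x - xs)‖ ‖mApp sqH (x' - xs)‖ := by
    rw [mul_max_of_nonneg _ _ (inv_nonneg.2 hsqμ.le)]
    exact max_le_max (hlow' _) (hlow' _)
  rw [mApp_inv_sub_mApp hdet, hsqH2, tauP_eq hM.le hμ.le]
  calc ‖mApp sqH⁻¹ (g x' - g x - mApp (Hess xs) (x' - x))‖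
      ≤ (√μ)⁻¹ * (M * max ‖x - xs‖ ‖x' - xs‖ * ‖x' - x‖) :=
        (norm_mApp_inv_le hdet hsqμ hlow _).trans
          (mul_le_mul_of_nonneg_left hsecant (by positivity))
    _ ≤ (√μ)⁻¹ * (M * ((√μ)⁻¹ * max ‖mApp sqH (x - xs)‖ ‖mApp sqH (x' - xs)‖) *
          ((√μ)⁻¹ * ‖mApp sqH (x' - x)‖)) := by
        gcongr (√μ)⁻¹ * (M * ?_ * ?_)
        exact hlow' _
    _ = M / √μ ^ 3 * max ‖mApp sqH (x - xs)‖ ‖mApp sqH (x' - xs)‖ * ‖mApp sqH (x' - x)‖ := by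
        field_simp

theorem weighted_secant_difference_bound
    {d : ℕ}
    (f : E d → ℝ) (g : E d → E d) (Hess : E d → Mat d) (xs : E d)
    (μ L M : ℝ) (hμ : 0 < μ) (hμL : μ ≤ L) (hM : 0 < M)
    -- `g` is the gradient of `f`, and `Hess` its Hessian (so `f` is twice differentiable)
    (hg : ∀ x, HasGradientAt f (g x) x)
    (hHd : ∀ x, HasFDerivAt g (Matrix.toEuclideanCLM (𝕜 := ℝ) (Hess x)) x)
    -- `xs` is the unique minimizer of `f`
    (hmin : ∀ x, f xs ≤ f x)
    (huniq : ∀ x, (∀ y, f x ≤ f y) → x = xs)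
    -- Assumption 1: strong convexity and gradient Lipschitz continuity
    (hgl : ∀ x y, μ * ‖x - y‖ ≤ ‖g x - g y‖)
    (hgu : ∀ x y, ‖g x - g y‖ ≤ L * ‖x - y‖)
    (hHl : ∀ x v, μ * ‖v‖ ^ 2 ≤ dot v (mApp (Hess x) v))
    (hHu : ∀ x v, dot v (mApp (Hess x) v) ≤ L * ‖v‖ ^ 2)
    -- Assumption 2: Hessian Lipschitz continuity toward the optimum
    (hLip : ∀ x, spec (Hess x - Hess xs) ≤ M * ‖x - xs‖)
    -- `sqH` is the positive definite square root `H_*^{1/2}` of `H_* = ∇²f(x_*)`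
    (sqH : Mat d) (hsqH : sqH.PosDef) (hsqH2 : sqH * sqH = Hess xs)
    (x x' : E d) :
    ‖mApp sqH⁻¹ (g x' - g x) - mApp sqH (x' - x)‖ ≤
      tauP M μ sqH xs x x' * ‖mApp sqH (x' - x)‖ :=
  weighted_secant_difference_bound_general g Hess xs μ M hμ hM hHd hHl hLip sqH hsqH hsqH2 x x'
end
end
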